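/- arXiv:1310.2052 — 6 statements merged into one kernel-verified Lean document; each statement's English description precedes it below -/
import Mathlib

section
/- Let h : ℝ^d → ℝ^d be continuous with a unique zero θ* satisfying the mean-reverting condition ⟨θ - θ*, h(θ)⟩ > 0 for all θ ≠ θ*. Let (h^n) be a sequence of continuous functions, where each h^n has a unique zero θ*ⁿ and satisfies the mean-reverting condition ⟨θ - θ*ⁿ, h^n(θ)⟩ > 0 for θ ≠ θ*ⁿ. If h^n → h locally uniformly, then θ*ⁿ → θ* as n → ∞. -/
/-!
Mean reversion of `h` towards `θ*` makes `θ ↦ ⟪θ - θ*, h θ⟫` positive on every sphere around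
`θ*`; by compactness it is bounded below there by some `m > 0`, and uniform convergence on the
sphere carries positivity over to `hⁿ` for large `n`. A field that points outwards on the sphere
`S(θ*, r)` and is mean-reverting towards `θ*ⁿ` forces `θ*ⁿ` into the closed ball: otherwise, at
the point where the segment from `θ*` to `θ*ⁿ` crosses the sphere, `hⁿ` would have to point both
away from and towards `θ*ⁿ` along that segment.
-/

open scoped RealInnerProductSpace
open Filter Topology Metric

variable {E : Type*} [NormedAddCommGroup E] [InnerProductSpace ℝ E]

def IsMeanRevertingTo (g : E → E) (a : E) : Prop :=
  ∀ θ, θ ≠ a → 0 < ⟪θ - a, g θ⟫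

theorem TendstoUniformlyOn.inner_left_of_norm_le {ι X : Type*} {l : Filter ι} {K : Set X}
    {F : ι → X → E} {f v : X → E} {C : ℝ} (hF : TendstoUniformlyOn F f l K)
    (hv : ∀ x ∈ K, ‖v x‖ ≤ C) :
    TendstoUniformlyOn (fun n x ↦ ⟪v x, F n x⟫) (fun x ↦ ⟪v x, f x⟫) l K := by
  rw [Metric.tendstoUniformlyOn_iff] at hF ⊢
  intro ε hε
  have hC : 0 < |C| + 1 := by positivity
  filter_upwards [hF (ε / (|C| + 1)) (div_pos hε hC)] with n hn x hx
  calc dist ⟪v x, f x⟫ ⟪v x, F n x⟫ = |⟪v x, f x - F n x⟫| := by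
        rw [Real.dist_eq, inner_sub_right]
    _ ≤ ‖v x‖ * dist (f x) (F n x) := by
        rw [dist_eq_norm]; exact abs_real_inner_le_norm _ _
    _ ≤ (|C| + 1) * dist (f x) (F n x) := by
        gcongr; linarith [hv x hx, le_abs_self C]
    _ < (|C| + 1) * (ε / (|C| + 1)) := by gcongr; exact hn x hx
    _ = ε := mul_div_cancel₀ ε hC.ne'

theorem TendstoUniformlyOn.eventually_forall_pos {ι X : Type*} [TopologicalSpace X]
    {l : Filter ι} {K : Set X} {Φ : ι → X → ℝ} {φ : X → ℝ} (hΦ : TendstoUniformlyOn Φ φ l K)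
    (hK : IsCompact K) (hφ : ContinuousOn φ K) (hpos : ∀ x ∈ K, 0 < φ x) :
    ∀ᶠ n in l, ∀ x ∈ K, 0 < Φ n x := by
  obtain ⟨m, hm, hmφ⟩ := hK.exists_forall_le' hφ hpos
  filter_upwards [hΦ.neg.eventually_forall_lt (neg_lt_zero.mpr hm)
    fun x hx ↦ neg_le_neg (hmφ x hx)] with n hn x hx
  simpa using hn x hx

theorem IsMeanRevertingTo.dist_le_of_inner_pos_on_sphere {g : E → E} {a b : E} {r : ℝ}
    (hg : IsMeanRevertingTo g b) (hr : 0 ≤ r)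
    (hsphere : ∀ θ ∈ sphere a r, 0 < ⟪θ - a, g θ⟫) : dist b a ≤ r := by
  by_contra! hbr
  have hd : 0 < ‖b - a‖ := by rw [← dist_eq_norm]; exact hr.trans_lt hbr
  set t := r / ‖b - a‖
  have ht0 : 0 ≤ t := div_nonneg hr hd.le
  have ht1 : t < 1 := by rwa [div_lt_one hd, ← dist_eq_norm]
  set θ := a + t • (b - a)
  have hθa : θ - a = t • (b - a) := add_sub_cancel_left a _
  have hθb : θ - b = (t - 1) • (b - a) := by simp only [θ, sub_smul, one_smul]; abel
  have hθ : θ ∈ sphere a r := by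
    rw [mem_sphere, dist_eq_norm, hθa, norm_smul, Real.norm_of_nonneg ht0,
      div_mul_cancel₀ r hd.ne']
  have hθne : θ ≠ b := by
    rw [← sub_ne_zero, hθb, smul_ne_zero_iff]
    exact ⟨sub_ne_zero.mpr ht1.ne, norm_pos_iff.mp hd⟩
  have hout := hsphere θ hθ
  have hin := hg θ hθne
  rw [hθa, real_inner_smul_left] at hout
  rw [hθb, real_inner_smul_left] at hin
  nlinarith

theorem IsMeanRevertingTo.tendsto_of_tendstoLocallyUniformly [ProperSpace E] {ι : Type*}
    {l : Filter ι} {h : E → E} {hn : ι → E → E} {θstar : E} {θstarn : ι → E}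
    (hcont : Continuous h) (hmr : IsMeanRevertingTo h θstar)
    (hnmr : ∀ n, IsMeanRevertingTo (hn n) (θstarn n)) (hloc : TendstoLocallyUniformly hn h l) :
    Tendsto θstarn l (𝓝 θstar) := by
  rw [Metric.tendsto_nhds]
  intro ε hε
  have hr : 0 < ε / 2 := half_pos hε
  have hunif : TendstoUniformlyOn hn h l (sphere θstar (ε / 2)) :=
    tendstoLocallyUniformly_iff_forall_isCompact.mp hloc _ (isCompact_sphere _ _)
  have hnorm : ∀ θ ∈ sphere θstar (ε / 2), ‖θ - θstar‖ ≤ ε / 2 := fun θ hθ ↦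
    (mem_sphere_iff_norm.mp hθ).le
  have hne : ∀ θ ∈ sphere θstar (ε / 2), θ ≠ θstar := by
    rintro θ hθ rfl
    simp [hr.ne] at hθ
  have hpos : ∀ᶠ n in l, ∀ θ ∈ sphere θstar (ε / 2), 0 < ⟪θ - θstar, hn n θ⟫ :=
    (hunif.inner_left_of_norm_le hnorm).eventually_forall_pos (isCompact_sphere _ _)
      (by fun_prop) fun θ hθ ↦ hmr θ (hne θ hθ)
  filter_upwards [hpos] with n hn
  exact ((hnmr n).dist_le_of_inner_pos_on_sphere hr.le hn).trans_lt (half_lt_self hε)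

theorem stmt_1_general {d : ℕ} (h : EuclideanSpace ℝ (Fin d) → EuclideanSpace ℝ (Fin d))
    (hn : ℕ → EuclideanSpace ℝ (Fin d) → EuclideanSpace ℝ (Fin d))
    (θstar : EuclideanSpace ℝ (Fin d)) (θstarn : ℕ → EuclideanSpace ℝ (Fin d))
    (hcont : Continuous h)
    (hmr : ∀ θ, θ ≠ θstar → (0:ℝ) < ⟪θ - θstar, h θ⟫)
    (hnmr : ∀ n θ, θ ≠ θstarn n → (0:ℝ) < ⟪θ - θstarn n, hn n θ⟫)
    (hloc : TendstoLocallyUniformly hn h atTop) :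
    Tendsto θstarn atTop (nhds θstar) :=
  IsMeanRevertingTo.tendsto_of_tendstoLocallyUniformly hcont hmr hnmr hloc

/-- If `hⁿ → h` locally uniformly, all functions are continuous with unique zeros
satisfying the mean-reverting condition, then the zeros `θ*ⁿ` converge to `θ*`. -/
theorem stmt_1 {d : ℕ} (h : EuclideanSpace ℝ (Fin d) → EuclideanSpace ℝ (Fin d))
    (hn : ℕ → EuclideanSpace ℝ (Fin d) → EuclideanSpace ℝ (Fin d))
    (θstar : EuclideanSpace ℝ (Fin d)) (θstarn : ℕ → EuclideanSpace ℝ (Fin d))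
    (hcont : Continuous h) (hncont : ∀ n, Continuous (hn n))
    (hzero : h θstar = 0) (hzero_unique : ∀ θ, h θ = 0 → θ = θstar)
    (hmr : ∀ θ, θ ≠ θstar → (0:ℝ) < ⟪θ - θstar, h θ⟫)
    (hnzero : ∀ n, hn n (θstarn n) = 0)
    (hnzero_unique : ∀ n θ, hn n θ = 0 → θ = θstarn n)
    (hnmr : ∀ n θ, θ ≠ θstarn n → (0:ℝ) < ⟪θ - θstarn n, hn n θ⟫)
    (hloc : TendstoLocallyUniformly hn h atTop) :
    Tendsto θstarn atTop (nhds θstar) :=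
  stmt_1_general h hn θstar θstarn hcont hmr hnmr hloc
end

section
/- Let h, h^n : ℝ^d → ℝ^d be continuously differentiable functions with unique zeros θ*, θ*ⁿ respectively; assume θ*ⁿ → θ*, Dh(θ*) is invertible, Dh^n → Dh locally uniformly, and there exists α > 0 and a vector E such that for every θ ∈ ℝ^d, n^α (h^n(θ) - h(θ)) → E(θ) as n → ∞, where E(θ*) = E. Then n^α (θ*ⁿ - θ*) → -Dh(θ*)^{-1} E as n → ∞. -/
/-!
Write `A = Dh(θ*)` and `sₙ = n^α (θ*ⁿ - θ*)`. Since `Dhⁿ` is uniformly close to `A` on a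
small ball around `θ*` for large `n`, the mean value inequality gives
`hⁿ(θ*ⁿ) - hⁿ(θ*) = A (θ*ⁿ - θ*) + o(θ*ⁿ - θ*)`. With `hⁿ(θ*ⁿ) = 0 = h(θ*)` and after
scaling by `n^α` this reads `A sₙ + n^α (hⁿ(θ*) - h(θ*)) = o(sₙ)`, where the bias term tends
to `E`. Applying `A⁻¹` shows that `sₙ` is bounded, hence the `o(sₙ)` term vanishes in the
limit and `sₙ → -A⁻¹ E`.
-/

open Filter Topology Asymptotics

theorem TendstoLocallyUniformly.tendsto_prod_nhds {ι α β : Type*} [TopologicalSpace α]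
    [UniformSpace β] {F : ι → α → β} {f : α → β} {p : Filter ι} {x : α}
    (h : TendstoLocallyUniformly F f p) (hf : ContinuousAt f x) :
    Tendsto (fun q : ι × α => F q.1 q.2) (p ×ˢ 𝓝 x) (𝓝 (f x)) :=
  (hf.tendsto.comp tendsto_snd).congr_uniformity (tendstoLocallyUniformly_iff_forall_tendsto.1 h x)

section MeanValue

variable {ι E F : Type*} [NormedAddCommGroup E] [NormedSpace ℝ E]
  [NormedAddCommGroup F] [NormedSpace ℝ F]

theorem isLittleO_sub_sub_of_tendsto_fderiv {f : ι → E → F} {L : E →L[ℝ] F} {x₀ : E}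
    {x : ι → E} {l : Filter ι} (hf : ∀ i, Differentiable ℝ (f i))
    (hf' : Tendsto (fun q : ι × E => fderiv ℝ (f q.1) q.2) (l ×ˢ 𝓝 x₀) (𝓝 L))
    (hx : Tendsto x l (𝓝 x₀)) :
    (fun i => f i (x i) - f i x₀ - L (x i - x₀)) =o[l] fun i => x i - x₀ := by
  refine isLittleO_iff.2 fun δ hδ => ?_
  obtain ⟨P, hP, Q, hQ, hPQ⟩ := eventually_prod_iff.1 (hf' (Metric.closedBall_mem_nhds L hδ))
  obtain ⟨r, hr, hQr⟩ := Metric.eventually_nhds_iff_ball.1 hQ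
  filter_upwards [hP, hx (Metric.ball_mem_nhds x₀ hr)] with i hi hxi
  exact (convex_ball x₀ r).norm_image_sub_le_of_norm_fderiv_le'
    (fun y _ => (hf i).differentiableAt) (fun y hy => mem_closedBall_iff_norm.1 (hPQ hi (hQr y hy)))
    (Metric.mem_ball_self hr) hxi

end MeanValue

theorem ContinuousLinearEquiv.tendsto_neg_symm_of_isLittleO_add {𝕜 ι E F : Type*}
    [NontriviallyNormedField 𝕜]
    [NormedAddCommGroup E] [NormedSpace 𝕜 E] [NormedAddCommGroup F] [NormedSpace 𝕜 F]
    (A : E ≃L[𝕜] F) {s : ι → E} {u : ι → F} {l : Filter ι} {c : F}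
    (hu : Tendsto u l (𝓝 c)) (hs : (fun i => A (s i) + u i) =o[l] s) :
    Tendsto s l (𝓝 (-A.symm c)) := by
  have hAu : Tendsto (fun i => A.symm (u i)) l (𝓝 (A.symm c)) :=
    (A.symm.continuous.tendsto c).comp hu
  have hsum : (fun i => s i + A.symm (u i)) =o[l] s :=
    ((A.symm.isBigO_comp _ l).trans_isLittleO hs).congr_left fun i => by simp
  have hbdd : s =O[l] fun _ => (1 : ℝ) :=
    (hsum.right_isBigO_sub.congr_right fun i => by simp).trans ((hAu.isBigO_one ℝ).neg_left)
  have hsum0 : Tendsto (fun i => s i + A.symm (u i)) l (𝓝 0) :=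
    (isLittleO_one_iff ℝ).1 (hsum.trans_isBigO hbdd)
  simpa using hsum0.sub hAu

theorem stmt_2_general {d : ℕ} (h : EuclideanSpace ℝ (Fin d) → EuclideanSpace ℝ (Fin d))
    (hn : ℕ → EuclideanSpace ℝ (Fin d) → EuclideanSpace ℝ (Fin d))
    (θstar : EuclideanSpace ℝ (Fin d)) (θstarn : ℕ → EuclideanSpace ℝ (Fin d))
    (hC1 : ContDiff ℝ 1 h) (hnC1 : ∀ n, ContDiff ℝ 1 (hn n))
    (hzero : h θstar = 0) (hnzero : ∀ n, hn n (θstarn n) = 0)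
    (hconv : Tendsto θstarn atTop (nhds θstar))
    (A : EuclideanSpace ℝ (Fin d) ≃L[ℝ] EuclideanSpace ℝ (Fin d))
    (hA : (A : EuclideanSpace ℝ (Fin d) →L[ℝ] EuclideanSpace ℝ (Fin d)) = fderiv ℝ h θstar)
    (hDloc : TendstoLocallyUniformly (fun n θ => fderiv ℝ (hn n) θ)
      (fun θ => fderiv ℝ h θ) atTop)
    (α : ℝ) (Efun : EuclideanSpace ℝ (Fin d) → EuclideanSpace ℝ (Fin d))
    (Evec : EuclideanSpace ℝ (Fin d)) (hE : Efun θstar = Evec)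
    (hrate : ∀ θ, Tendsto (fun n : ℕ => (n : ℝ) ^ α • (hn n θ - h θ)) atTop (nhds (Efun θ))) :
    Tendsto (fun n : ℕ => (n : ℝ) ^ α • (θstarn n - θstar)) atTop (nhds (-(A.symm Evec))) := by
  have hDhn : Tendsto (fun q : ℕ × _ => fderiv ℝ (hn q.1) q.2) (atTop ×ˢ 𝓝 θstar)
      (𝓝 (A : EuclideanSpace ℝ (Fin d) →L[ℝ] EuclideanSpace ℝ (Fin d))) :=
    hA ▸ hDloc.tendsto_prod_nhds (hC1.continuous_fderiv one_ne_zero).continuousAt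
  have hlin := isLittleO_sub_sub_of_tendsto_fderiv (fun n => (hnC1 n).differentiable one_ne_zero)
    hDhn hconv
  have hscaled : (fun n : ℕ => A ((n : ℝ) ^ α • (θstarn n - θstar)) + (n : ℝ) ^ α • hn n θstar)
      =o[atTop] fun n : ℕ => (n : ℝ) ^ α • (θstarn n - θstar) :=
    ((isBigO_refl (fun n : ℕ => (n : ℝ) ^ α) atTop).smul_isLittleO hlin.neg_left).congr_left
      fun n => by simp [hnzero, smul_add]
  have hbias : Tendsto (fun n : ℕ => (n : ℝ) ^ α • hn n θstar) atTop (𝓝 Evec) := by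
    simpa [hzero, hE] using hrate θstar
  exact A.tendsto_neg_symm_of_isLittleO_add hbias hscaled

/-- Transfer of the weak error rate to the implicit weak error:
if `n^α (hⁿ(θ) - h(θ)) → E(θ)` pointwise, `Dhⁿ → Dh` locally uniformly, `θ*ⁿ → θ*`
and `Dh(θ*)` is invertible, then `n^α (θ*ⁿ - θ*) → -Dh(θ*)⁻¹ E(θ*)`. -/
theorem stmt_2 {d : ℕ} (h : EuclideanSpace ℝ (Fin d) → EuclideanSpace ℝ (Fin d))
    (hn : ℕ → EuclideanSpace ℝ (Fin d) → EuclideanSpace ℝ (Fin d))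
    (θstar : EuclideanSpace ℝ (Fin d)) (θstarn : ℕ → EuclideanSpace ℝ (Fin d))
    (hC1 : ContDiff ℝ 1 h) (hnC1 : ∀ n, ContDiff ℝ 1 (hn n))
    (hzero : h θstar = 0) (hnzero : ∀ n, hn n (θstarn n) = 0)
    (hconv : Tendsto θstarn atTop (nhds θstar))
    (A : EuclideanSpace ℝ (Fin d) ≃L[ℝ] EuclideanSpace ℝ (Fin d))
    (hA : (A : EuclideanSpace ℝ (Fin d) →L[ℝ] EuclideanSpace ℝ (Fin d)) = fderiv ℝ h θstar)
    (hDloc : TendstoLocallyUniformly (fun n θ => fderiv ℝ (hn n) θ)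
      (fun θ => fderiv ℝ h θ) atTop)
    (α : ℝ) (hα : 0 < α) (Efun : EuclideanSpace ℝ (Fin d) → EuclideanSpace ℝ (Fin d))
    (Evec : EuclideanSpace ℝ (Fin d)) (hE : Efun θstar = Evec)
    (hrate : ∀ θ, Tendsto (fun n : ℕ => (n : ℝ) ^ α • (hn n θ - h θ)) atTop (nhds (Efun θ))) :
    Tendsto (fun n : ℕ => (n : ℝ) ^ α • (θstarn n - θstar)) atTop (nhds (-(A.symm Evec))) :=
  stmt_2_general h hn θstar θstarn hC1 hnC1 hzero hnzero hconv A hA hDloc α Efun Evec hE hrate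
end

section
/- Let γ : [0,∞) → (0,∞) be decreasing to 0 with ∑_{n≥1} γ(n) = ∞, and suppose γ(t) = γ₀/t for t ≥ 1. Let λ > 0, a > 0, b > 0 with bλγ₀ > a. Set s_n = ∑_{k=1}^n γ(k). Then there is a constant C such that exp(-λ b s_n) ∑_{k=1}^n exp(λ b s_k) γ(k)^{a+1} ≤ C n^{-a} for all n ≥ 1. -/
/-!
With `s_n = γ₀ H_n` and `μ = bλγ₀`, the bounds `log n ≤ H_n ≤ 1 + log n` give
`exp(-λb s_n) ≤ n^(-μ)` and `exp(λb s_k) γ(k)^(a+1) ≤ e^μ γ₀^(a+1) k^(μ-a-1)`. Since `μ - a > 0`,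
the power sum `∑_{k ≤ n} k^(μ-a-1)` is `O(n^(μ-a))`, and the two powers of `n` combine to `n^(-a)`.
-/

open Finset Real

section PowerSums

-- Bernoulli's inequality `(1 - 1/x) ^ p ≤ 1 - p/x`, multiplied by `x ^ p`.
lemma mul_rpow_sub_one_le_rpow_sub_rpow_sub_one {p x : ℝ} (hp₀ : 0 ≤ p) (hp₁ : p ≤ 1)
    (hx : 1 ≤ x) : p * x ^ (p - 1) ≤ x ^ p - (x - 1) ^ p := by
  have hx₀ : 0 < x := by linarith
  have hbern : (1 + -x⁻¹) ^ p ≤ 1 + p * -x⁻¹ :=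
    rpow_one_add_le_one_add_mul_self (by linarith [inv_le_one_of_one_le₀ hx]) hp₀ hp₁
  have hshift : (x - 1) ^ p = x ^ p * (1 + -x⁻¹) ^ p := by
    rw [← mul_rpow hx₀.le (by linarith [inv_le_one_of_one_le₀ hx])]
    congr 1
    field_simp
    ring
  rw [hshift, rpow_sub_one hx₀.ne', div_eq_mul_inv]
  nlinarith [mul_le_mul_of_nonneg_left hbern (rpow_nonneg hx₀.le p)]

lemma sum_Icc_rpow_sub_one_le_of_le_one {p : ℝ} (hp₀ : 0 < p) (hp₁ : p ≤ 1) (n : ℕ) :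
    ∑ k ∈ Icc 1 n, (k : ℝ) ^ (p - 1) ≤ (n : ℝ) ^ p / p := by
  induction n with
  | zero => simp [zero_rpow hp₀.ne']
  | succ n ih =>
    rw [sum_Icc_succ_top (by omega)]
    have hstep := mul_rpow_sub_one_le_rpow_sub_rpow_sub_one hp₀.le hp₁
      (by simp : (1 : ℝ) ≤ (n + 1 : ℕ))
    push_cast at hstep ⊢
    rw [add_sub_cancel_right] at hstep
    rw [le_div_iff₀ hp₀] at ih ⊢
    nlinarith

lemma sum_Icc_rpow_sub_one_le_of_one_le {p : ℝ} (hp : 1 ≤ p) (n : ℕ) :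
    ∑ k ∈ Icc 1 n, (k : ℝ) ^ (p - 1) ≤ (n : ℝ) ^ p :=
  calc ∑ k ∈ Icc 1 n, (k : ℝ) ^ (p - 1)
      ≤ ∑ _k ∈ Icc 1 n, (n : ℝ) ^ (p - 1) := by
        refine sum_le_sum fun k hk => ?_
        exact rpow_le_rpow k.cast_nonneg (by exact_mod_cast (mem_Icc.mp hk).2) (by linarith)
    _ = (n : ℝ) ^ (p - 1 + 1) := by
        rw [sum_const, Nat.card_Icc, add_tsub_cancel_right, nsmul_eq_mul,
          rpow_add_one' n.cast_nonneg (by linarith), mul_comm]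
    _ = (n : ℝ) ^ p := by rw [sub_add_cancel]

lemma sum_Icc_rpow_sub_one_le {p : ℝ} (hp : 0 < p) (n : ℕ) :
    ∑ k ∈ Icc 1 n, (k : ℝ) ^ (p - 1) ≤ (1 + 1 / p) * (n : ℝ) ^ p := by
  rcases le_total p 1 with hp₁ | hp₁
  · calc _ ≤ (n : ℝ) ^ p / p := sum_Icc_rpow_sub_one_le_of_le_one hp hp₁ n
      _ ≤ (1 + 1 / p) * (n : ℝ) ^ p := by rw [div_eq_mul_one_div, mul_comm]; gcongr; linarith
  · calc _ ≤ (n : ℝ) ^ p := sum_Icc_rpow_sub_one_le_of_one_le hp₁ n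
      _ ≤ (1 + 1 / p) * (n : ℝ) ^ p :=
        le_mul_of_one_le_left (by positivity) (le_add_of_nonneg_right (by positivity))

end PowerSums

section Harmonic

lemma sum_Icc_div_natCast_eq_mul_harmonic (c : ℝ) (n : ℕ) :
    ∑ k ∈ Icc 1 n, c / (k : ℝ) = c * harmonic n := by
  simp [harmonic_eq_sum_Icc, mul_sum, div_eq_mul_inv]

variable {μ : ℝ}

lemma exp_mul_harmonic_le (hμ : 0 ≤ μ) {k : ℕ} (hk : k ≠ 0) :
    exp (μ * harmonic k) ≤ exp μ * (k : ℝ) ^ μ := by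
  rw [rpow_def_of_pos (by positivity), ← exp_add, exp_le_exp]
  nlinarith [harmonic_le_one_add_log k]

lemma exp_neg_mul_harmonic_le (hμ : 0 ≤ μ) {n : ℕ} (hn : n ≠ 0) :
    exp (-μ * harmonic n) ≤ (n : ℝ) ^ (-μ) := by
  rw [rpow_def_of_pos (by positivity), exp_le_exp]
  have hlog : log n ≤ harmonic n := by simpa using log_le_harmonic_floor (n : ℝ) n.cast_nonneg
  nlinarith

lemma exp_mul_harmonic_mul_div_rpow_le (hμ : 0 ≤ μ) {c : ℝ} (hc : 0 ≤ c) (a : ℝ) {k : ℕ}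
    (hk : k ≠ 0) :
    exp (μ * harmonic k) * (c / k) ^ (a + 1) ≤ exp μ * c ^ (a + 1) * (k : ℝ) ^ (μ - a - 1) := by
  have hk₀ : (0 : ℝ) < k := by positivity
  calc exp (μ * harmonic k) * (c / k) ^ (a + 1)
      ≤ exp μ * (k : ℝ) ^ μ * (c ^ (a + 1) / (k : ℝ) ^ (a + 1)) := by
        rw [div_rpow hc hk₀.le]
        gcongr
        exact exp_mul_harmonic_le hμ hk
    _ = exp μ * c ^ (a + 1) * (k : ℝ) ^ (μ - a - 1) := by
        rw [sub_sub, rpow_sub hk₀]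
        ring

end Harmonic

theorem stmt_4_general (γ₀ lam a b : ℝ) (hγ₀ : 0 < γ₀)
    (ha : 0 < a) (hcond : a < b * lam * γ₀) :
    ∃ C : ℝ, 0 < C ∧ ∀ n : ℕ, 1 ≤ n →
      Real.exp (-(lam * b) * (∑ k ∈ Finset.Icc 1 n, γ₀ / (k : ℝ))) *
        ∑ k ∈ Finset.Icc 1 n,
          Real.exp (lam * b * (∑ j ∈ Finset.Icc 1 k, γ₀ / (j : ℝ))) * (γ₀ / (k : ℝ)) ^ (a + 1)
      ≤ C * (n : ℝ) ^ (-a) := by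
  set μ := b * lam * γ₀
  have hμ : 0 ≤ μ := by linarith
  refine ⟨exp μ * γ₀ ^ (a + 1) * (1 + 1 / (μ - a)), by have := sub_pos.mpr hcond; positivity,
    fun n hn => ?_⟩
  have hn₀ : n ≠ 0 := by omega
  simp only [sum_Icc_div_natCast_eq_mul_harmonic]
  calc exp (-(lam * b) * (γ₀ * harmonic n)) *
        ∑ k ∈ Icc 1 n, exp (lam * b * (γ₀ * harmonic k)) * (γ₀ / k) ^ (a + 1)
      = exp (-μ * harmonic n) * ∑ k ∈ Icc 1 n, exp (μ * harmonic k) * (γ₀ / k) ^ (a + 1) := by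
        simp only [μ, neg_mul, ← mul_assoc, mul_comm lam b]
    _ ≤ (n : ℝ) ^ (-μ) * ∑ k ∈ Icc 1 n, exp μ * γ₀ ^ (a + 1) * (k : ℝ) ^ (μ - a - 1) := by
        gcongr ?_ * ?_
        · exact exp_neg_mul_harmonic_le hμ hn₀
        · exact sum_le_sum fun k hk =>
            exp_mul_harmonic_mul_div_rpow_le hμ hγ₀.le a (Nat.one_le_iff_ne_zero.mp (mem_Icc.mp hk).1)
    _ ≤ (n : ℝ) ^ (-μ) * (exp μ * γ₀ ^ (a + 1) * ((1 + 1 / (μ - a)) * (n : ℝ) ^ (μ - a))) := by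
        rw [← mul_sum]
        gcongr
        exact sum_Icc_rpow_sub_one_le (sub_pos.mpr hcond) n
    _ = exp μ * γ₀ ^ (a + 1) * (1 + 1 / (μ - a)) * (n : ℝ) ^ (-a) := by
        have hpow : (n : ℝ) ^ (-μ) * (n : ℝ) ^ (μ - a) = (n : ℝ) ^ (-a) := by
          rw [← rpow_add (by positivity)]
          ring_nf
        rw [← hpow]
        ring

/-- Discrete comparison estimate: with `γ(k) = γ₀/k`, `s_n = ∑_{k=1}^n γ(k)` and
`bλγ₀ > a`, one has `exp(-λb s_n) ∑_{k=1}^n exp(λb s_k) γ(k)^{a+1} ≤ C n^{-a}`. -/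
theorem stmt_4 (γ₀ lam a b : ℝ) (hγ₀ : 0 < γ₀) (hlam : 0 < lam)
    (ha : 0 < a) (hb : 0 < b) (hcond : a < b * lam * γ₀) :
    ∃ C : ℝ, 0 < C ∧ ∀ n : ℕ, 1 ≤ n →
      Real.exp (-(lam * b) * (∑ k ∈ Finset.Icc 1 n, γ₀ / (k : ℝ))) *
        ∑ k ∈ Finset.Icc 1 n,
          Real.exp (lam * b * (∑ j ∈ Finset.Icc 1 k, γ₀ / (j : ℝ))) * (γ₀ / (k : ℝ)) ^ (a + 1)
      ≤ C * (n : ℝ) ^ (-a) :=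
  stmt_4_general γ₀ lam a b hγ₀ ha hcond
end

section
/- Let (z_n) be a nonnegative sequence satisfying z_{n+1} ≤ (1 - λγ_n + o(γ_n)) z_n + o(γ_n) for n large, where λ > 0 and (γ_n) is a positive sequence decreasing to 0 with ∑ γ_n = ∞. Then z_n → 0 as n → ∞. -/
open Filter Finset

/-! The recursion says that, up to `o(γ_n)` errors, `z_{n+1}` lies below the convex combination
`(1 - u_n) z_n + u_n δ` with weights `u_n = (λ/2) γ_n`, for any prescribed `δ > 0`. Such a step
can never carry a value `≤ ε` above `ε > δ`, and while `z_n > ε` it lowers `z_n` by at least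
`(ε - δ) u_n`; since `∑ u_n = ∞` the sequence cannot stay above `ε` forever. Hence
`z_n ≤ ε` eventually, for every `ε > 0`. -/

section ConvexStep

variable {z u : ℕ → ℝ} {δ ε : ℝ}

theorem tendsto_atBot_of_forall_le_sub_mul {η : ℝ} {N : ℕ} (hη : 0 < η)
    (hdiv : Tendsto (fun n => ∑ k ∈ range n, u k) atTop atTop)
    (hstep : ∀ n ≥ N, z (n + 1) ≤ z n - η * u n) :
    Tendsto z atTop atBot := by
  have hbound : ∀ n ≥ N,
      z n ≤ (z N + η * ∑ k ∈ range N, u k) + -(η * ∑ k ∈ range n, u k) := by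
    intro n hn
    induction n, hn using Nat.le_induction with
    | base => linarith
    | succ n hn ih =>
      rw [sum_range_succ]
      linarith [hstep n hn]
  refine tendsto_atBot_mono' _ (eventually_atTop.2 ⟨N, hbound⟩) ?_
  exact tendsto_atBot_add_const_left _ _ (tendsto_neg_atTop_atBot.comp (hdiv.const_mul_atTop hη))

theorem exists_ge_le_of_convex_step {N : ℕ} (hδε : δ < ε) (hu : ∀ n ≥ N, 0 ≤ u n)
    (hdiv : Tendsto (fun n => ∑ k ∈ range n, u k) atTop atTop)
    (hrec : ∀ n ≥ N, z (n + 1) ≤ (1 - u n) * z n + u n * δ) :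
    ∃ m ≥ N, z m ≤ ε := by
  by_contra! habove
  have hdecr : ∀ n ≥ N, z (n + 1) ≤ z n - (ε - δ) * u n := fun n hn => by
    nlinarith [hrec n hn, mul_le_mul_of_nonneg_left (habove n hn).le (hu n hn)]
  obtain ⟨m, hmε, hmN⟩ := (((tendsto_atBot_of_forall_le_sub_mul (sub_pos.2 hδε) hdiv
    hdecr).eventually_lt_atBot ε).and (eventually_ge_atTop N)).exists
  exact (habove m hmN).not_gt hmε

theorem forall_ge_le_of_convex_step {m : ℕ} (hδε : δ ≤ ε)
    (hu : ∀ n ≥ m, 0 ≤ u n ∧ u n ≤ 1)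
    (hrec : ∀ n ≥ m, z (n + 1) ≤ (1 - u n) * z n + u n * δ) (hm : z m ≤ ε) :
    ∀ n ≥ m, z n ≤ ε := by
  intro n hn
  induction n, hn using Nat.le_induction with
  | base => exact hm
  | succ n hn ih =>
    obtain ⟨hu0, hu1⟩ := hu n hn
    calc z (n + 1) ≤ (1 - u n) * z n + u n * δ := hrec n hn
      _ ≤ (1 - u n) * ε + u n * ε := by gcongr
      _ = ε := by ring

theorem eventually_le_of_convex_step (hδε : δ < ε)
    (hu : ∀ᶠ n in atTop, 0 ≤ u n ∧ u n ≤ 1)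
    (hdiv : Tendsto (fun n => ∑ k ∈ range n, u k) atTop atTop)
    (hrec : ∀ᶠ n in atTop, z (n + 1) ≤ (1 - u n) * z n + u n * δ) :
    ∀ᶠ n in atTop, z n ≤ ε := by
  obtain ⟨N, hN⟩ := (hu.and hrec).exists_forall_of_atTop
  obtain ⟨m, hmN, hm⟩ :=
    exists_ge_le_of_convex_step hδε (fun n hn => (hN n hn).1.1) hdiv fun n hn => (hN n hn).2
  exact eventually_atTop.2 ⟨m, forall_ge_le_of_convex_step hδε.le
    (fun n hn => (hN n (hmN.trans hn)).1) (fun n hn => (hN n (hmN.trans hn)).2) hm⟩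

end ConvexStep

/-- If a nonnegative sequence satisfies `z_{n+1} ≤ (1 - λγ_n + o(γ_n)) z_n + o(γ_n)`
with `λ > 0`, `γ_n ↓ 0` and `∑ γ_n = ∞`, then `z_n → 0`. -/
theorem stmt_6 (z γ a e : ℕ → ℝ) (lam : ℝ) (hlam : 0 < lam)
    (hz : ∀ n, 0 ≤ z n) (hγpos : ∀ n, 0 < γ n)
    (hγ0 : Tendsto γ atTop (nhds 0))
    (hγdiv : Tendsto (fun n => ∑ k ∈ Finset.range n, γ k) atTop atTop)
    (ha : Tendsto a atTop (nhds 0)) (he : Tendsto e atTop (nhds 0))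
    (n₀ : ℕ)
    (hrec : ∀ n, n₀ ≤ n → z (n + 1) ≤ (1 - lam * γ n + a n * γ n) * z n + γ n * e n) :
    Tendsto z atTop (nhds 0) := by
  have hsmall : ∀ ε > 0, ∀ᶠ n in atTop, z n ≤ ε := by
    intro ε hε
    set c := lam / 2
    have hc : 0 < c := by positivity
    have hu : ∀ᶠ n in atTop, 0 ≤ c * γ n ∧ c * γ n ≤ 1 := by
      filter_upwards [(hγ0.const_mul c).eventually_le_const (by simp : c * 0 < 1)] with n hn
      exact ⟨mul_nonneg hc.le (hγpos n).le, hn⟩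
    have hdiv : Tendsto (fun n => ∑ k ∈ range n, c * γ k) atTop atTop := by
      simpa only [← mul_sum] using hγdiv.const_mul_atTop hc
    have hstep : ∀ᶠ n in atTop, z (n + 1) ≤ (1 - c * γ n) * z n + c * γ n * (ε / 2) := by
      filter_upwards [ha.eventually_le_const hc, he.eventually_le_const (by positivity : 0 < c * (ε / 2)),
        eventually_ge_atTop n₀] with n han hen hn
      have hrec' := hrec n hn
      rw [show lam = 2 * c by ring] at hrec'
      nlinarith [mul_le_mul_of_nonneg_left han (mul_nonneg (hγpos n).le (hz n)),
        mul_le_mul_of_nonneg_left hen (hγpos n).le]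
    exact eventually_le_of_convex_step (half_lt_self hε) hu hdiv hstep
  refine tendsto_order.2 ⟨fun b hb => Eventually.of_forall fun n => hb.trans_le (hz n), fun b hb => ?_⟩
  filter_upwards [hsmall (b / 2) (by positivity)] with n hn
  linarith
end

section
/- Let (z_p) be a nonnegative sequence satisfying z_{p+1} ≤ (1 - 2λγ_{p+1} + Cγ_{p+1}²) z_p + Cγ_{p+1}² for all p ≥ 0, where λ > 0, C > 0, γ_p = γ₀/p with 2λγ₀ > 1. Then there exists a constant C' (depending only on λ, C, γ₀, z₀) such that z_p ≤ C' γ_p for all p ≥ 1. -/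
/-! With `a = 2λγ₀ > 1` and `b = Cγ₀²` the recursion reads
`z_{p+1} ≤ (1 - a/(p+1) + b/(p+1)²) z_p + b/(p+1)²`. Once `p ≥ a` and `p (a - 1) ≥ 2b`, the
bound `p z_p ≤ M` propagates from `p` to `p + 1` for every `M ≥ 2b/(a - 1)`, because the
contraction `(a - 1) M / p²` gained per step dominates the additive error `b/p²`. Hence
`p z_p` is eventually bounded, so bounded, which is `z_p = O(γ₀/p)`. -/

open Filter

lemma succ_mul_le_of_mul_le {a b q M x y : ℝ} (ha : 1 < a) (hb : 0 ≤ b) (hq : 0 < q)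
    (haq : a ≤ q + 1) (hM : 2 * b ≤ M * (a - 1)) (hqb : 2 * b ≤ q * (a - 1)) (hx : q * x ≤ M)
    (hy : y ≤ (1 - a / (q + 1) + b / (q + 1) ^ 2) * x + b / (q + 1) ^ 2) :
    (q + 1) * y ≤ M := by
  have hq1 : 0 < q + 1 := by linarith
  have hcoef : 0 ≤ 1 - a / (q + 1) + b / (q + 1) ^ 2 := by
    have : a / (q + 1) ≤ 1 := (div_le_one hq1).2 haq
    have : 0 ≤ b / (q + 1) ^ 2 := by positivity
    linarith
  have hxM : x ≤ M / q := (le_div_iff₀' hq).2 hx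
  have hM0 : 0 ≤ M := nonneg_of_mul_nonneg_left (by linarith) (by linarith : (0:ℝ) < a - 1)
  -- the two halves of `M (a - 1) q` absorb `b q` and `M b` respectively
  have hgain : b * q + M * b ≤ M * (a - 1) * (q + 1) := by
    nlinarith [mul_le_mul_of_nonneg_right hM hq.le, mul_le_mul_of_nonneg_left hqb hM0]
  calc (q + 1) * y
      ≤ (q + 1) * ((1 - a / (q + 1) + b / (q + 1) ^ 2) * (M / q) + b / (q + 1) ^ 2) := by
        gcongr
        exact hy.trans (by gcongr)
    _ = M + ((b - (a - 1) * (q + 1)) * M + b * q) / (q * (q + 1)) := by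
        field_simp
        ring
    _ ≤ M := by
        have : ((b - (a - 1) * (q + 1)) * M + b * q) / (q * (q + 1)) ≤ 0 :=
          div_nonpos_of_nonpos_of_nonneg (by linarith) (by positivity)
        linarith

lemma eventually_natCast_mul_le_of_recursion {z : ℕ → ℝ} {a b : ℝ} (ha : 1 < a) (hb : 0 ≤ b)
    (hrec : ∀ p : ℕ, z (p + 1) ≤
      (1 - a / (p + 1 : ℝ) + b / (p + 1 : ℝ) ^ 2) * z p + b / (p + 1 : ℝ) ^ 2) :
    ∃ M, ∀ᶠ p : ℕ in atTop, (p : ℝ) * z p ≤ M := by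
  obtain ⟨N, hN⟩ := exists_nat_ge (max a (2 * b / (a - 1)))
  have ha1 : 0 < a - 1 := by linarith
  have hNa : a ≤ N := (le_max_left _ _).trans hN
  have hNb : 2 * b ≤ N * (a - 1) := (div_le_iff₀ ha1).1 ((le_max_right _ _).trans hN)
  set M := max (2 * b / (a - 1)) (N * z N)
  have hMb : 2 * b ≤ M * (a - 1) := (div_le_iff₀ ha1).1 (le_max_left _ _)
  refine ⟨M, eventually_atTop.2 ⟨N, fun p hp => ?_⟩⟩
  induction p, hp using Nat.le_induction with
  | base => exact le_max_right _ _
  | succ p hNp ih =>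
    have hpN : (N : ℝ) ≤ p := by exact_mod_cast hNp
    push_cast
    exact succ_mul_le_of_mul_le ha hb (by linarith) (by linarith) hMb
      (hNb.trans (by gcongr)) ih (hrec p)

lemma bddAbove_range_natCast_mul_of_recursion {z : ℕ → ℝ} {a b : ℝ} (ha : 1 < a) (hb : 0 ≤ b)
    (hrec : ∀ p : ℕ, z (p + 1) ≤
      (1 - a / (p + 1 : ℝ) + b / (p + 1 : ℝ) ^ 2) * z p + b / (p + 1 : ℝ) ^ 2) :
    BddAbove (Set.range fun p : ℕ => (p : ℝ) * z p) :=
  let ⟨_, hM⟩ := eventually_natCast_mul_le_of_recursion ha hb hrec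
  (isBoundedUnder_of_eventually_le hM).bddAbove_range

theorem stmt_10_general (z : ℕ → ℝ) (lam C γ₀ : ℝ) (hC : 0 < C) (hγ₀ : 0 < γ₀)
    (hcond : 1 < 2 * lam * γ₀)
    (hrec : ∀ p : ℕ, z (p + 1) ≤
      (1 - 2 * lam * (γ₀ / (p + 1 : ℝ)) + C * (γ₀ / (p + 1 : ℝ)) ^ 2) * z p +
        C * (γ₀ / (p + 1 : ℝ)) ^ 2) :
    ∃ C' : ℝ, 0 < C' ∧ ∀ p : ℕ, 1 ≤ p → z p ≤ C' * (γ₀ / (p : ℝ)) := by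
  have hrec' : ∀ p : ℕ, z (p + 1) ≤ (1 - 2 * lam * γ₀ / (p + 1 : ℝ) +
      C * γ₀ ^ 2 / (p + 1 : ℝ) ^ 2) * z p + C * γ₀ ^ 2 / (p + 1 : ℝ) ^ 2 := fun p => by
    simpa only [mul_div_assoc, div_pow] using hrec p
  obtain ⟨K, hK⟩ := bddAbove_range_natCast_mul_of_recursion hcond (by positivity) hrec'
  refine ⟨max K 1 / γ₀, by positivity, fun p hp => ?_⟩
  have hp0 : (0 : ℝ) < p := by exact_mod_cast hp
  have hpz : (p : ℝ) * z p ≤ max K 1 := (hK ⟨p, rfl⟩).trans (le_max_left _ _)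
  calc z p ≤ max K 1 / p := (le_div_iff₀' hp0).2 hpz
    _ = max K 1 / γ₀ * (γ₀ / p) := by field_simp

/-- If `z_{p+1} ≤ (1 - 2λγ_{p+1} + Cγ_{p+1}²) z_p + Cγ_{p+1}²` with `γ_p = γ₀/p` and
`2λγ₀ > 1`, then `z_p ≤ C' γ_p` for all `p ≥ 1`. -/
theorem stmt_10 (z : ℕ → ℝ) (lam C γ₀ : ℝ) (hlam : 0 < lam) (hC : 0 < C) (hγ₀ : 0 < γ₀)
    (hcond : 1 < 2 * lam * γ₀) (hznn : ∀ p, 0 ≤ z p)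
    (hrec : ∀ p : ℕ, z (p + 1) ≤
      (1 - 2 * lam * (γ₀ / (p + 1 : ℝ)) + C * (γ₀ / (p + 1 : ℝ)) ^ 2) * z p +
        C * (γ₀ / (p + 1 : ℝ)) ^ 2) :
    ∃ C' : ℝ, 0 < C' ∧ ∀ p : ℕ, 1 ≤ p → z p ≤ C' * (γ₀ / (p : ℝ)) :=
  stmt_10_general z lam C γ₀ hC hγ₀ hcond hrec
end

section
/- Let h^n : ℝ^d → ℝ^d be C¹ functions with zeros θ*ⁿ converging to θ*, with Dh^n converging locally uniformly to Dh (Dh continuous), and suppose λ̲ > 0 satisfies ⟨θ - θ*ⁿ, h^n(θ)⟩ ≥ λ̲|θ - θ*ⁿ|² for all θ and all n. Then every eigenvalue of Dh(θ*) has real part at least λ̲; i.e., λ_m ≥ λ̲, where λ_m denotes the smallest real part among eigenvalues of Dh(θ*). -/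
/-!
Testing the mean-reverting inequality at `θ = θ*ⁿ + t u` and letting `t → 0⁺` shows that each
`Dhⁿ(θ*ⁿ)` is coercive with constant `λ̲`: `λ̲ |u|² ≤ ⟪u, Dhⁿ(θ*ⁿ) u⟫`. Coercivity with a fixed
constant is a closed condition on operators, and `Dhⁿ(θ*ⁿ) → Dh(θ*)` by local uniform convergence,
so `Dh(θ*)` is coercive as well. Finally, if `A v = μ v` with `v = x + i y`, the real and imaginary
parts give `⟪x, A x⟫ + ⟪y, A y⟫ = Re μ (|x|² + |y|²)`, whence `Re μ ≥ λ̲`.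
-/

open Filter Topology Matrix
open scoped RealInnerProductSpace

section Coercive

variable {E : Type*} [NormedAddCommGroup E] [InnerProductSpace ℝ E]

theorem le_inner_fderiv_of_le_inner_sub {g : E → E} {x₀ : E} {lam : ℝ}
    (hg : DifferentiableAt ℝ g x₀) (hzero : g x₀ = 0)
    (hmr : ∀ θ, lam * ‖θ - x₀‖ ^ 2 ≤ ⟪θ - x₀, g θ⟫) (u : E) :
    lam * ‖u‖ ^ 2 ≤ ⟪u, fderiv ℝ g x₀ u⟫ := by
  have hslope : Tendsto (fun t : ℝ => ⟪u, t⁻¹ • g (x₀ + t • u)⟫) (𝓝[>] 0)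
      (𝓝 ⟪u, fderiv ℝ g x₀ u⟫) := by
    simpa [hzero, Function.comp_def] using
      ((continuous_const.inner continuous_id).tendsto _).comp
        (hg.hasFDerivAt.hasLineDerivAt u).tendsto_slope_zero_right
  refine ge_of_tendsto hslope ?_
  filter_upwards [self_mem_nhdsWithin] with t (ht : 0 < t)
  have h := hmr (x₀ + t • u)
  rw [add_sub_cancel_left, norm_smul, Real.norm_eq_abs, abs_of_pos ht, real_inner_smul_left] at h
  rw [real_inner_smul_right, le_inv_mul_iff₀ ht]
  exact le_of_mul_le_mul_left (by linear_combination h) ht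

theorem isClosed_setOf_le_inner_apply (lam : ℝ) :
    IsClosed {L : E →L[ℝ] E | ∀ u, lam * ‖u‖ ^ 2 ≤ ⟪u, L u⟫} := by
  simp only [Set.ofPred_forall]
  exact isClosed_iInter fun u =>
    isClosed_le continuous_const (continuous_const.inner (continuous_id.clm_apply continuous_const))

end Coercive

namespace Matrix

variable {ι : Type*} [Fintype ι]

theorem exists_mulVec_eq_smul_of_mem_spectrum [DecidableEq ι] {K : Type*} [Field K]
    {A : Matrix ι ι K} {μ : K} (hμ : μ ∈ spectrum K A) : ∃ v ≠ 0, A *ᵥ v = μ • v := by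
  rw [← spectrum_toLin', ← Module.End.hasEigenvalue_iff_mem_spectrum] at hμ
  obtain ⟨v, hv⟩ := hμ.exists_hasEigenvector
  exact ⟨v, hv.2, hv.apply_eq_smul⟩

theorem re_map_algebraMap_mulVec (A : Matrix ι ι ℝ) (v : ι → ℂ) (i : ι) :
    ((A.map (algebraMap ℝ ℂ) *ᵥ v) i).re = (A *ᵥ fun j => (v j).re) i := by
  simp [mulVec, dotProduct, Complex.re_sum]

theorem im_map_algebraMap_mulVec (A : Matrix ι ι ℝ) (v : ι → ℂ) (i : ι) :
    ((A.map (algebraMap ℝ ℂ) *ᵥ v) i).im = (A *ᵥ fun j => (v j).im) i := by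
  simp [mulVec, dotProduct, Complex.im_sum]

theorem le_re_of_mem_spectrum_map_algebraMap [DecidableEq ι] {A : Matrix ι ι ℝ} {lam : ℝ}
    (hA : ∀ x : ι → ℝ, lam * (x ⬝ᵥ x) ≤ x ⬝ᵥ (A *ᵥ x)) {μ : ℂ}
    (hμ : μ ∈ spectrum ℂ (A.map (algebraMap ℝ ℂ))) : lam ≤ μ.re := by
  obtain ⟨v, hv0, hv⟩ := exists_mulVec_eq_smul_of_mem_spectrum hμ
  set x : ι → ℝ := fun i => (v i).re
  set y : ι → ℝ := fun i => (v i).im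
  have hx : A *ᵥ x = μ.re • x - μ.im • y := funext fun i => by
    simpa using (re_map_algebraMap_mulVec A v i).symm.trans (congrArg Complex.re (congrFun hv i))
  have hy : A *ᵥ y = μ.re • y + μ.im • x := funext fun i => by
    simpa [add_comm] using
      (im_map_algebraMap_mulVec A v i).symm.trans (congrArg Complex.im (congrFun hv i))
  have hquad : x ⬝ᵥ (A *ᵥ x) + y ⬝ᵥ (A *ᵥ y) = μ.re * (x ⬝ᵥ x + y ⬝ᵥ y) := by
    simp only [hx, hy, dotProduct_sub, dotProduct_add, dotProduct_smul, smul_eq_mul,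
      dotProduct_comm y x]
    ring
  have hpos : 0 < x ⬝ᵥ x + y ⬝ᵥ y := by
    have hx_nonneg : 0 ≤ x ⬝ᵥ x := by simpa using dotProduct_self_star_nonneg x
    have hy_nonneg : 0 ≤ y ⬝ᵥ y := by simpa using dotProduct_self_star_nonneg y
    refine lt_of_le_of_ne (add_nonneg hx_nonneg hy_nonneg) fun h => hv0 ?_
    have hx_zero : x = 0 := dotProduct_self_eq_zero.1 (by linarith)
    have hy_zero : y = 0 := dotProduct_self_eq_zero.1 (by linarith)
    exact funext fun i => Complex.ext (congrFun hx_zero i) (congrFun hy_zero i)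
  refine le_of_mul_le_mul_right ?_ hpos
  rw [← hquad, mul_add]
  exact add_le_add (hA x) (hA y)

end Matrix

namespace EuclideanSpace

variable {ι : Type*} [Fintype ι] [DecidableEq ι]

theorem of_apply_single_mulVec (L : EuclideanSpace ℝ ι →ₗ[ℝ] EuclideanSpace ℝ ι) (x : ι → ℝ) :
    (Matrix.of fun i j => L (single j 1) i) *ᵥ x = WithLp.ofLp (L (WithLp.toLp 2 x)) := by
  ext i
  conv_rhs => rw [← (basisFun ι ℝ).sum_repr (WithLp.toLp 2 x)]
  simp [Matrix.mulVec, dotProduct, mul_comm]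

theorem le_re_of_mem_spectrum_of_le_inner {L : EuclideanSpace ℝ ι →ₗ[ℝ] EuclideanSpace ℝ ι}
    {lam : ℝ} (hL : ∀ u, lam * ‖u‖ ^ 2 ≤ ⟪u, L u⟫) {μ : ℂ}
    (hμ : μ ∈ spectrum ℂ ((Matrix.of fun i j => L (single j 1) i).map (algebraMap ℝ ℂ))) :
    lam ≤ μ.re := by
  refine Matrix.le_re_of_mem_spectrum_map_algebraMap (fun x => ?_) hμ
  have h := hL (WithLp.toLp 2 x)
  rw [← real_inner_self_eq_norm_sq, inner_eq_star_dotProduct, inner_eq_star_dotProduct] at h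
  simpa [of_apply_single_mulVec, dotProduct_comm] using h

end EuclideanSpace

theorem stmt_11_general {d : ℕ} (h : EuclideanSpace ℝ (Fin d) → EuclideanSpace ℝ (Fin d))
    (hn : ℕ → EuclideanSpace ℝ (Fin d) → EuclideanSpace ℝ (Fin d))
    (θstar : EuclideanSpace ℝ (Fin d)) (θstarn : ℕ → EuclideanSpace ℝ (Fin d))
    (hC1 : ContDiff ℝ 1 h) (hnC1 : ∀ n, ContDiff ℝ 1 (hn n))
    (hnzero : ∀ n, hn n (θstarn n) = 0)
    (hconv : Tendsto θstarn atTop (nhds θstar))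
    (hDloc : TendstoLocallyUniformly (fun n x => fderiv ℝ (hn n) x)
      (fun x => fderiv ℝ h x) atTop)
    (lam : ℝ)
    (hmr : ∀ n θ, lam * ‖θ - θstarn n‖ ^ 2 ≤ ⟪θ - θstarn n, hn n θ⟫) :
    ∀ μ ∈ spectrum ℂ ((Matrix.of fun i j =>
        fderiv ℝ h θstar (EuclideanSpace.single j 1) i).map (algebraMap ℝ ℂ)),
      lam ≤ μ.re := by
  have hcoer_n : ∀ n u, lam * ‖u‖ ^ 2 ≤ ⟪u, fderiv ℝ (hn n) (θstarn n) u⟫ := fun n =>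
    le_inner_fderiv_of_le_inner_sub ((hnC1 n).differentiable one_ne_zero _) (hnzero n) (hmr n)
  have hlim : Tendsto (fun n => fderiv ℝ (hn n) (θstarn n)) atTop (𝓝 (fderiv ℝ h θstar)) :=
    hDloc.tendsto_comp (hC1.continuous_fderiv one_ne_zero).continuousAt hconv
  have hcoer : ∀ u, lam * ‖u‖ ^ 2 ≤ ⟪u, fderiv ℝ h θstar u⟫ :=
    (isClosed_setOf_le_inner_apply lam).mem_of_tendsto hlim (Eventually.of_forall hcoer_n)
  exact fun μ hμ => EuclideanSpace.le_re_of_mem_spectrum_of_le_inner hcoer hμ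

/-- If the uniform strong mean-reverting condition
`⟪θ - θ*ⁿ, hⁿ(θ)⟫ ≥ λ̲ |θ - θ*ⁿ|²` holds for all `n`, `θ*ⁿ → θ*`, and `Dhⁿ → Dh`
locally uniformly with `Dh` continuous, then every eigenvalue of `Dh(θ*)` has real
part at least `λ̲`. -/
theorem stmt_11 {d : ℕ} (h : EuclideanSpace ℝ (Fin d) → EuclideanSpace ℝ (Fin d))
    (hn : ℕ → EuclideanSpace ℝ (Fin d) → EuclideanSpace ℝ (Fin d))
    (θstar : EuclideanSpace ℝ (Fin d)) (θstarn : ℕ → EuclideanSpace ℝ (Fin d))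
    (hC1 : ContDiff ℝ 1 h) (hnC1 : ∀ n, ContDiff ℝ 1 (hn n))
    (hzero : h θstar = 0) (hnzero : ∀ n, hn n (θstarn n) = 0)
    (hconv : Tendsto θstarn atTop (nhds θstar))
    (hDloc : TendstoLocallyUniformly (fun n x => fderiv ℝ (hn n) x)
      (fun x => fderiv ℝ h x) atTop)
    (lam : ℝ) (hlam : 0 < lam)
    (hmr : ∀ n θ, lam * ‖θ - θstarn n‖ ^ 2 ≤ ⟪θ - θstarn n, hn n θ⟫) :
    ∀ μ ∈ spectrum ℂ ((Matrix.of fun i j =>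
        fderiv ℝ h θstar (EuclideanSpace.single j 1) i).map (algebraMap ℝ ℂ)),
      lam ≤ μ.re :=
  stmt_11_general h hn θstar θstarn hC1 hnC1 hnzero hconv hDloc lam hmr
end
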